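/- arXiv:2007.11094 — 5 statements merged into one kernel-verified Lean document; each statement's English description precedes it below -/
import Mathlib

section
/- Let S be a finite set of points in ℝ³ and let 𝒜 be an f-shallow cutting for S and 𝓑 an f'-shallow cutting for a subset S' ⊆ S with f' ≥ 2f. Then every cell of 𝒜 is contained in some cell of 𝓑. -/
/-- `q` dominates `p` coordinatewise. -/
def dominates3 (q p : Fin 3 → ℝ) : Prop := ∀ i, p i ≤ q i

/-- `p` lies in the cell `[0, c 0] × [0, c 1] × [0, c 2]`. -/
def inCell3 (c p : Fin 3 → ℝ) : Prop := ∀ i, 0 ≤ p i ∧ p i ≤ c i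

/-- A `t`-shallow cutting for `P`: a collection of cells (given by their corners)
each containing at most `2t` points of `P`, such that every (nonnegative) point
dominating at most `t` points of `P` lies in some cell. -/
def IsShallowCutting (t : ℕ) (P : Finset (Fin 3 → ℝ)) (A : Finset (Fin 3 → ℝ)) : Prop :=
  (∀ c ∈ A, {p ∈ (P : Set (Fin 3 → ℝ)) | inCell3 c p}.ncard ≤ 2 * t) ∧
  (∀ q : Fin 3 → ℝ, (∀ i, 0 ≤ q i) →
    {p ∈ (P : Set (Fin 3 → ℝ)) | dominates3 q p}.ncard ≤ t → ∃ c ∈ A, inCell3 c q)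

/-- Every cell of an `f`-shallow cutting of `S` is contained in some cell of an
`f'`-shallow cutting of a subset `S' ⊆ S` whenever `f' ≥ 2 f`. -/
theorem cell_containment (f f' : ℕ) (S S' : Finset (Fin 3 → ℝ))
    (hS : ∀ p ∈ S, ∀ i, 0 ≤ p i)
    (hsub : S' ⊆ S) (hf : 2 * f ≤ f')
    (A B : Finset (Fin 3 → ℝ))
    (hA : IsShallowCutting f S A) (hB : IsShallowCutting f' S' B)
    (hApos : ∀ c ∈ A, ∀ i, 0 ≤ c i) :
    ∀ a ∈ A, ∃ b ∈ B, ∀ p, inCell3 a p → inCell3 b p := by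
  intro a ha
  have hle : {p ∈ (S' : Set (Fin 3 → ℝ)) | dominates3 a p}.ncard ≤ f' := by
    have hsubset : {p ∈ (S' : Set (Fin 3 → ℝ)) | dominates3 a p} ⊆
        {p ∈ (S : Set (Fin 3 → ℝ)) | inCell3 a p} := by
      rintro p ⟨hp, hd⟩
      exact ⟨hsub hp, fun i => ⟨hS p (hsub hp) i, hd i⟩⟩
    have hfin : {p ∈ (S : Set (Fin 3 → ℝ)) | inCell3 a p}.Finite :=
      S.finite_toSet.subset (fun p hp => hp.1)
    calc {p ∈ (S' : Set (Fin 3 → ℝ)) | dominates3 a p}.ncard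
        ≤ {p ∈ (S : Set (Fin 3 → ℝ)) | inCell3 a p}.ncard :=
          Set.ncard_le_ncard hsubset hfin
      _ ≤ 2 * f := hA.1 a ha
      _ ≤ f' := hf
  obtain ⟨b, hb, hab⟩ := hB.2 a (hApos a ha) hle
  exact ⟨b, hb, fun p hp i => ⟨(hp i).1, (hp i).2.trans (hab i).2⟩⟩
end

section
/- Suppose a function c : ℕ → ℝ≥0 satisfies c(n) = O(log log n) + 2·c(⌈√(n · log³ n)⌉) for all sufficiently large n, and c(n) = O(log log n) in the base cases n ≤ log⁸ n. Then c(n) = O(log n). -/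
open Real

set_option maxHeartbeats 1000000

lemma lb_mono {x y : ℝ} (hx : 0 < x) (hxy : x ≤ y) : logb 2 x ≤ logb 2 y :=
  Real.logb_le_logb_of_le one_lt_two hx hxy

lemma lb_two_pow (k : ℕ) : logb 2 ((2:ℝ)^k) = k := by
  rw [Real.logb_pow, Real.logb_self_eq_one one_lt_two, mul_one]

lemma lb_sqrt {x : ℝ} (hx : 0 ≤ x) : logb 2 (Real.sqrt x) = logb 2 x / 2 := by
  rw [Real.logb, Real.logb, Real.log_sqrt hx]; ring

lemma lb_le_three_sqrt {x : ℝ} (hx : 1 ≤ x) : logb 2 x ≤ 3 * Real.sqrt x := by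
  have hx0 : (0:ℝ) < x := by linarith
  have hs : Real.log (Real.sqrt x) ≤ Real.sqrt x - 1 :=
    Real.log_le_sub_one_of_pos (Real.sqrt_pos.2 hx0)
  rw [Real.log_sqrt hx0.le] at hs
  have hlog : Real.log x ≤ 2 * Real.sqrt x := by linarith
  have h2 : (0.6931471803 : ℝ) < Real.log 2 := Real.log_two_gt_d9
  have hsn : (0:ℝ) ≤ Real.sqrt x := Real.sqrt_nonneg x
  rw [Real.logb, div_le_iff₀ (by linarith)]
  nlinarith

lemma lb_le_eighth {x : ℝ} (hx : 576 ≤ x) : logb 2 x ≤ x / 8 := by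
  have h1 : logb 2 x ≤ 3 * Real.sqrt x := lb_le_three_sqrt (by linarith)
  have h2 : Real.sqrt x * Real.sqrt x = x := Real.mul_self_sqrt (by linarith)
  have h3 : (0:ℝ) ≤ Real.sqrt x := Real.sqrt_nonneg x
  nlinarith [sq_nonneg (Real.sqrt x - 24)]

/-- The recursion step size: `m(n) = ⌈√(n · log₂³ n)⌉`. -/
noncomputable def recStep (n : ℕ) : ℕ :=
  ⌈Real.sqrt (n * (Real.logb 2 n) ^ 3)⌉₊

/-- If `c : ℕ → ℝ≥0` satisfies `c n ≤ A · log₂ log₂ n + 2 · c (recStep n)` for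
all `n ≥ N₀` (where `recStep n < n` holds for such `n`), and `c n ≤ A` for the
base cases `n < N₀`, then `c n = O(log n)`. -/
theorem recurrence_space_per_point (A : ℝ) (N₀ : ℕ)
    (c : ℕ → NNReal)
    (hm : ∀ n, N₀ ≤ n → recStep n < n)
    (hrec : ∀ n, N₀ ≤ n →
      (c n : ℝ) ≤ A * Real.logb 2 (Real.logb 2 n) + 2 * (c (recStep n) : ℝ))
    (hbase : ∀ n, n < N₀ → (c n : ℝ) ≤ A) :
    ∃ C : ℝ, ∀ n : ℕ, 2 ≤ n → (c n : ℝ) ≤ C * Real.logb 2 n := by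
  have h2 : (1:ℝ) < 2 := one_lt_two
  -- N₀ ≥ 1, hence A ≥ 0
  have hN₀ : 1 ≤ N₀ := by
    by_contra h
    have h0 : N₀ = 0 := by omega
    have := hm 0 (by omega)
    have hr0 : recStep 0 = 0 := by simp [recStep]
    omega
  have hA : 0 ≤ A := le_trans (c 0).coe_nonneg (hbase 0 hN₀)
  -- thresholds
  set N₁ : ℕ := max N₀ (2^1024) with hN₁def
  have hN₁pos : 0 < N₁ := lt_of_lt_of_le (by positivity) (le_max_right _ _)
  have hN₁N₀ : N₀ ≤ N₁ := le_max_left _ _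
  have hN₁N₂ : N₁ ≤ N₁ * N₁ := Nat.le_mul_of_pos_left _ hN₁pos
  have hN₁R : (0:ℝ) < (N₁:ℝ) := by exact_mod_cast hN₁pos
  set T : ℝ := logb 2 (N₁:ℝ) with hTdef
  have hT : (1024:ℝ) ≤ T := by
    have hle : ((2:ℝ))^(1024:ℕ) ≤ (N₁:ℝ) := by
      have h := le_max_right N₀ (2^1024)
      calc ((2:ℝ))^(1024:ℕ) = ((2^1024 : ℕ):ℝ) := by push_cast; ring
        _ ≤ (N₁:ℝ) := by exact_mod_cast h
    calc (1024:ℝ) = logb 2 ((2:ℝ)^(1024:ℕ)) := (lb_two_pow 1024).symm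
      _ ≤ T := lb_mono (by positivity) hle
  have hN₂T : logb 2 ((N₁*N₁:ℕ):ℝ) = 2*T := by
    push_cast
    rw [Real.logb_mul (ne_of_gt hN₁R) (ne_of_gt hN₁R)]
    ring
  -- base-case constant
  set M : ℝ := (((Finset.range (N₁*N₁)).sup c : NNReal) : ℝ) with hMdef
  have hM : ∀ n, n < N₁*N₁ → (c n : ℝ) ≤ M := fun n hn =>
    NNReal.coe_le_coe.2 (Finset.le_sup (Finset.mem_range.2 hn))
  have hM0 : 0 ≤ M := NNReal.coe_nonneg _
  set E : ℝ := logb 2 (2*T) with hEdef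
  have hE0 : 0 ≤ E := Real.logb_nonneg h2 (by linarith)
  set C : ℝ := M + 2*A*E with hCdef
  have hC0 : 0 ≤ C := by positivity
  -- main claim
  have key : ∀ n : ℕ, N₁ ≤ n →
      (c n : ℝ) ≤ C * logb 2 (n:ℝ) - (2*A+5*C) * logb 2 (logb 2 (n:ℝ)) := by
    intro n
    induction n using Nat.strong_induction_on with
    | _ n ih =>
    intro hn
    have hnN : (N₁:ℝ) ≤ (n:ℝ) := by exact_mod_cast hn
    have hnpos : (0:ℝ) < (n:ℝ) := lt_of_lt_of_le hN₁R hnN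
    have hL_T : T ≤ logb 2 (n:ℝ) := lb_mono hN₁R hnN
    set L : ℝ := logb 2 (n:ℝ) with hLdef
    have hLpos : (0:ℝ) < L := by linarith
    set ℓ : ℝ := logb 2 L with hℓdef
    by_cases hsmall : n < N₁ * N₁
    · -- base case: N₁ ≤ n < N₁²
      have hLle : L ≤ 2*T := by
        rw [← hN₂T]
        exact lb_mono hnpos (by exact_mod_cast hsmall.le)
      have hℓE : ℓ ≤ E := lb_mono hLpos hLle
      have hℓ8 : ℓ ≤ L/8 := lb_le_eighth (by linarith)
      have hℓ0 : 0 ≤ ℓ := Real.logb_nonneg h2 (by linarith)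
      have hcM : (c n:ℝ) ≤ M := hM n hsmall
      have e1 : 0 ≤ C * (L - 5*ℓ - 1) := mul_nonneg hC0 (by linarith)
      have e2 : 0 ≤ A * (E - ℓ) := mul_nonneg hA (by linarith)
      nlinarith [e1, e2]
    · -- recursive case: n ≥ N₁²
      push_neg at hsmall
      have hN₀n : N₀ ≤ n := le_trans (le_trans hN₁N₀ hN₁N₂) hsmall
      have hmn : recStep n < n := hm n hN₀n
      have hL2T : 2*T ≤ L := by
        rw [← hN₂T]
        exact lb_mono (by exact_mod_cast (Nat.lt_of_lt_of_le hN₁pos hN₁N₂))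
          (by exact_mod_cast hsmall)
      have hL1 : (1:ℝ) ≤ L := by linarith
      have hℓ11 : (11:ℝ) ≤ ℓ := by
        calc (11:ℝ) = logb 2 ((2:ℝ)^(11:ℕ)) := (lb_two_pow 11).symm
          _ ≤ logb 2 L := lb_mono (by positivity) (by norm_num; linarith)
      set m : ℕ := recStep n with hmdef
      have hsq : Real.sqrt ((n:ℝ) * L^3) ≤ (m:ℝ) := Nat.le_ceil _
      have hn1 : (1:ℝ) ≤ (n:ℝ) := by
        have h1n : 1 ≤ n := by omega
        exact_mod_cast h1n
      have hL3 : (1:ℝ) ≤ L^3 := by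
        nlinarith [mul_nonneg (by linarith : (0:ℝ) ≤ L - 1) (sq_nonneg L),
          mul_nonneg (by linarith : (0:ℝ) ≤ L - 1) (by linarith : (0:ℝ) ≤ L)]
      have hnL3 : (n:ℝ) ≤ (n:ℝ) * L^3 := by
        nlinarith [mul_le_mul_of_nonneg_left hL3 hnpos.le]
      have hmlow : Real.sqrt (n:ℝ) ≤ (m:ℝ) :=
        le_trans (Real.sqrt_le_sqrt hnL3) hsq
      have hsqpos : (0:ℝ) < Real.sqrt ((n:ℝ) * L^3) :=
        Real.sqrt_pos.2 (mul_pos hnpos (pow_pos hLpos 3))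
      have hsq1 : (1:ℝ) ≤ Real.sqrt ((n:ℝ)*L^3) := by
        rw [show (1:ℝ) = Real.sqrt 1 from Real.sqrt_one.symm]
        exact Real.sqrt_le_sqrt (by linarith)
      have hmpos : (0:ℝ) < (m:ℝ) := lt_of_lt_of_le (by linarith) hsq
      have hmN₁ : N₁ ≤ m := by
        have hc : (N₁:ℝ) ≤ (m:ℝ) := by
          have h1 : (N₁:ℝ) = Real.sqrt ((N₁:ℝ)*(N₁:ℝ)) :=
            (Real.sqrt_mul_self hN₁R.le).symm
          have h3 : ((N₁:ℝ)*(N₁:ℝ)) ≤ (n:ℝ) := by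
            calc (N₁:ℝ)*(N₁:ℝ) = ((N₁*N₁:ℕ):ℝ) := by push_cast; ring
              _ ≤ (n:ℝ) := by exact_mod_cast hsmall
          calc (N₁:ℝ) = Real.sqrt ((N₁:ℝ)*(N₁:ℝ)) := h1
            _ ≤ Real.sqrt (n:ℝ) := Real.sqrt_le_sqrt h3
            _ ≤ (m:ℝ) := hmlow
        exact_mod_cast hc
      have hmub : (m:ℝ) < Real.sqrt ((n:ℝ)*L^3) + 1 :=
        Nat.ceil_lt_add_one hsqpos.le
      set Lm : ℝ := logb 2 (m:ℝ) with hLmdef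
      set ℓm : ℝ := logb 2 Lm with hℓmdef
      have hLm_ub : Lm ≤ 1 + (L + 3*ℓ)/2 := by
        have h1 : (m:ℝ) ≤ 2 * Real.sqrt ((n:ℝ)*L^3) := by linarith
        have h2' : logb 2 ((2:ℝ) * Real.sqrt ((n:ℝ)*L^3)) = 1 + (L + 3*ℓ)/2 := by
          rw [Real.logb_mul two_ne_zero (ne_of_gt hsqpos), Real.logb_self_eq_one h2,
            lb_sqrt (by positivity), Real.logb_mul (ne_of_gt hnpos) (by positivity),
            Real.logb_pow]
          rw [hℓdef, hLdef]
          ring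
        calc Lm ≤ logb 2 ((2:ℝ) * Real.sqrt ((n:ℝ)*L^3)) := lb_mono hmpos h1
          _ = 1 + (L + 3*ℓ)/2 := h2'
      have hLm_lb : L/2 ≤ Lm := by
        have h1 : logb 2 (Real.sqrt (n:ℝ)) = L/2 := by
          rw [lb_sqrt hnpos.le, hLdef]
        calc L/2 = logb 2 (Real.sqrt (n:ℝ)) := h1.symm
          _ ≤ Lm := lb_mono (Real.sqrt_pos.2 hnpos) hmlow
      have hLmpos : 0 < Lm := by linarith
      have hℓm_lb : ℓ - 1 ≤ ℓm := by
        have h1 : logb 2 (L/2) ≤ ℓm := lb_mono (by linarith) hLm_lb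
        rw [Real.logb_div (ne_of_gt hLpos) two_ne_zero, Real.logb_self_eq_one h2] at h1
        linarith
      have hrec' := hrec n hN₀n
      rw [← hmdef, ← hLdef, ← hℓdef] at hrec'
      have hih := ih m hmn hmN₁
      rw [← hLmdef, ← hℓmdef] at hih
      have e1 : 0 ≤ C * (1 + (L + 3*ℓ)/2 - Lm) := mul_nonneg hC0 (by linarith)
      have e2 : 0 ≤ (2*A+5*C) * (ℓm - ℓ + 1) := mul_nonneg (by linarith) (by linarith)
      have e3 : 0 ≤ A * (ℓ - 11) := mul_nonneg hA (by linarith)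
      have e4 : 0 ≤ C * (ℓ - 11) := mul_nonneg hC0 (by linarith)
      nlinarith [e1, e2, e3, e4]
  -- conclude
  refine ⟨C + M, ?_⟩
  intro n hn2
  have hn2R : (2:ℝ) ≤ (n:ℝ) := by exact_mod_cast hn2
  have hL1 : 1 ≤ logb 2 (n:ℝ) := by
    calc (1:ℝ) = logb 2 2 := (Real.logb_self_eq_one h2).symm
      _ ≤ logb 2 (n:ℝ) := lb_mono two_pos hn2R
  by_cases h : N₁ ≤ n
  · have hk := key n h
    have hℓ0 : 0 ≤ logb 2 (logb 2 (n:ℝ)) := Real.logb_nonneg h2 hL1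
    have e1 : 0 ≤ (2*A+5*C) * logb 2 (logb 2 (n:ℝ)) :=
      mul_nonneg (by linarith) hℓ0
    have e2 : 0 ≤ M * (logb 2 (n:ℝ) - 1) := mul_nonneg hM0 (by linarith)
    nlinarith [e1, e2]
  · push_neg at h
    have hcM := hM n (lt_of_lt_of_le h hN₁N₂)
    have e1 : 0 ≤ M * (logb 2 (n:ℝ) - 1) := mul_nonneg hM0 (by linarith)
    have e2 : 0 ≤ C * logb 2 (n:ℝ) := mul_nonneg hC0 (by linarith)
    nlinarith [e1, e2]
end

section
/- Suppose q : ℕ → ℝ≥0 satisfies q(n) ≤ A·logᵉ n + q(⌈√(n·log³ n)⌉) for all n above a threshold, and q(n) ≤ A for n below the threshold, where 0 < ε < 1/2. Then q(n) = O(logᵉ n · log log n). -/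
open Real

set_option maxRecDepth 10000

lemma my_logb_mono {x y : ℝ} (hx : 0 < x) (h : x ≤ y) :
    Real.logb 2 x ≤ Real.logb 2 y := by
  unfold Real.logb
  gcongr

lemma my_logb_ge_two {x : ℝ} (hx : 4 ≤ x) : 2 ≤ Real.logb 2 x := by
  have h4 : Real.logb 2 4 = 2 := by
    rw [show (4:ℝ) = (2:ℝ)^(2:ℕ) by norm_num, ← Real.rpow_natCast,
      Real.logb_rpow (by norm_num) (by norm_num)]
    norm_num
  calc (2:ℝ) = Real.logb 2 4 := h4.symm
    _ ≤ Real.logb 2 x := my_logb_mono (by norm_num) hx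

lemma my_logb_ge_one {x : ℝ} (hx : 2 ≤ x) : 1 ≤ Real.logb 2 x := by
  calc (1:ℝ) = Real.logb 2 2 := (Real.logb_self_eq_one one_lt_two).symm
    _ ≤ Real.logb 2 x := my_logb_mono (by norm_num) hx

lemma my_recStep_le {n : ℕ} (hn : 2^100 ≤ n) :
    (recStep n : ℝ) ≤ (n:ℝ) ^ (4/5 : ℝ) := by
  set x : ℝ := (n:ℝ) with hxdef
  have hx : (2:ℝ)^(100:ℕ) ≤ x := by rw [hxdef]; exact_mod_cast hn
  have hx1 : (1:ℝ) ≤ x := le_trans (by norm_num) hx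
  have hx0 : (0:ℝ) < x := by linarith
  have hxp0 : (0:ℝ) ≤ x ^ (1/10:ℝ) := Real.rpow_nonneg hx0.le _
  have hl2 : (0.6931471803:ℝ) < Real.log 2 := Real.log_two_gt_d9
  have hlog : Real.logb 2 x ≤ 15 * x ^ (1/10 : ℝ) := by
    have h1 : Real.log x ≤ x ^ (1/10:ℝ) / (1/10) := Real.log_le_rpow_div hx0.le (by norm_num)
    rw [Real.logb, div_le_iff₀ (Real.log_pos one_lt_two)]
    have h2 := mul_le_mul_of_nonneg_left hl2.le hxp0
    linarith
  have hlb0 : 0 ≤ Real.logb 2 x := Real.logb_nonneg one_lt_two hx1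
  have hcube : (Real.logb 2 x)^3 ≤ 3375 * x ^ (3/10:ℝ) := by
    calc (Real.logb 2 x)^3 ≤ (15 * x ^ (1/10:ℝ))^3 := pow_le_pow_left₀ hlb0 hlog 3
      _ = 3375 * (x^(1/10:ℝ))^(3:ℕ) := by ring
      _ = 3375 * x^(3/10:ℝ) := by
          rw [← Real.rpow_natCast (x^(1/10:ℝ)) 3, ← Real.rpow_mul hx0.le]
          norm_num
  have hpow30 : (13500:ℝ) ≤ x ^ (3/10:ℝ) := by
    have he : ((2:ℝ)^(100:ℕ)) ^ (3/10:ℝ) = (2:ℝ)^(30:ℕ) := by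
      rw [← Real.rpow_natCast 2 100, ← Real.rpow_mul (by norm_num),
        ← Real.rpow_natCast 2 30]
      norm_num
    have h2 : ((2:ℝ)^(100:ℕ))^(3/10:ℝ) ≤ x ^ (3/10:ℝ) :=
      Real.rpow_le_rpow (by positivity) hx (by norm_num)
    rw [he] at h2
    norm_num at h2
    linarith
  have hsplit : x ^ (8/5:ℝ) = x ^ (13/10:ℝ) * x ^ (3/10:ℝ) := by
    rw [← Real.rpow_add hx0]; norm_num
  have hsplit2 : x ^ (13/10:ℝ) = x * x ^ (3/10:ℝ) := by
    nth_rewrite 2 [← Real.rpow_one x]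
    rw [← Real.rpow_add hx0]; norm_num
  have hxp30 : (0:ℝ) ≤ x ^ (3/10:ℝ) := Real.rpow_nonneg hx0.le _
  have hprod : x * (Real.logb 2 x)^3 ≤ (1/4) * x ^ (8/5:ℝ) := by
    have h1 : x * (Real.logb 2 x)^3 ≤ x * (3375 * x ^ (3/10:ℝ)) :=
      mul_le_mul_of_nonneg_left hcube hx0.le
    rw [hsplit, hsplit2]
    nlinarith [mul_nonneg hx0.le hxp30, mul_nonneg (mul_nonneg hx0.le hxp30) hxp30]
  have hsq : ((1/2) * x^(4/5:ℝ))^2 = (1/4) * x ^ (8/5:ℝ) := by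
    rw [mul_pow, ← Real.rpow_natCast (x^(4/5:ℝ)) 2, ← Real.rpow_mul hx0.le]
    norm_num
  have hsqrt : Real.sqrt (x * (Real.logb 2 x)^3) ≤ (1/2) * x ^ (4/5:ℝ) := by
    have h1 := Real.sqrt_le_sqrt hprod
    rwa [← hsq, Real.sqrt_sq (by positivity)] at h1
  have hbig : (2:ℝ) ≤ x ^ (4/5:ℝ) := by
    calc (2:ℝ) = 2^(1:ℝ) := (Real.rpow_one 2).symm
      _ ≤ ((2:ℝ)^(100:ℕ))^(4/5:ℝ) := by
          rw [← Real.rpow_natCast 2 100, ← Real.rpow_mul (by norm_num)]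
          exact Real.rpow_le_rpow_of_exponent_le (by norm_num) (by norm_num)
      _ ≤ x ^ (4/5:ℝ) := Real.rpow_le_rpow (by positivity) hx (by norm_num)
  have hceil : (recStep n : ℝ) < Real.sqrt (x * (Real.logb 2 x)^3) + 1 := by
    unfold recStep
    exact Nat.ceil_lt_add_one (Real.sqrt_nonneg _)
  linarith

lemma my_two_le_recStep {n : ℕ} (hn : 4 ≤ n) : 2 ≤ recStep n := by
  have hx : (4:ℝ) ≤ (n:ℝ) := by exact_mod_cast hn
  have hlb : 2 ≤ Real.logb 2 (n:ℝ) := my_logb_ge_two hx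
  have h1 : (1:ℝ) ≤ (Real.logb 2 (n:ℝ))^3 := by
    have := pow_le_pow_left₀ (by norm_num : (0:ℝ) ≤ 2) hlb 3
    norm_num at this
    linarith
  have h4 : (4:ℝ) ≤ (n:ℝ) * (Real.logb 2 (n:ℝ))^3 := by nlinarith
  have hs : (2:ℝ) ≤ Real.sqrt ((n:ℝ) * (Real.logb 2 (n:ℝ))^3) := by
    rw [Real.le_sqrt (by norm_num) (by linarith)]
    nlinarith
  have h2 : (2:ℝ) ≤ (recStep n : ℝ) :=
    le_trans hs (Nat.le_ceil _)
  exact_mod_cast h2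

lemma my_logb_recStep {n : ℕ} (hn : 2^100 ≤ n) :
    Real.logb 2 (recStep n : ℝ) ≤ (4/5) * Real.logb 2 (n:ℝ) := by
  have hn4 : 4 ≤ n := le_trans (by norm_num) hn
  have hm2 : (2:ℝ) ≤ (recStep n : ℝ) := by exact_mod_cast my_two_le_recStep hn4
  have hx0 : (0:ℝ) < (n:ℝ) := by
    have : 0 < n := lt_of_lt_of_le (by norm_num) hn4
    exact_mod_cast this
  have heq : Real.logb 2 ((n:ℝ) ^ (4/5:ℝ)) = (4/5) * Real.logb 2 (n:ℝ) := by
    rw [Real.logb, Real.log_rpow hx0, Real.logb, mul_div_assoc]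
  calc Real.logb 2 (recStep n : ℝ) ≤ Real.logb 2 ((n:ℝ) ^ (4/5:ℝ)) :=
        my_logb_mono (by linarith) (my_recStep_le hn)
    _ = (4/5) * Real.logb 2 (n:ℝ) := heq

/-- If `q : ℕ → ℝ≥0` satisfies `q n ≤ A · (log₂ n)^ε + q (recStep n)` for all
`n ≥ N₀` (where `recStep n < n` for such `n`) and `q n ≤ A` for `n < N₀`, with
`0 < ε < 1/2`, then `q n = O((log n)^ε · log log n)`. -/
theorem recurrence_query_time (ε A : ℝ) (hε : 0 < ε) (hε' : ε < 1 / 2)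
    (hA : 0 < A) (N₀ : ℕ) (q : ℕ → NNReal)
    (hm : ∀ n, N₀ ≤ n → recStep n < n)
    (hrec : ∀ n, N₀ ≤ n →
      (q n : ℝ) ≤ A * (Real.logb 2 n) ^ (ε : ℝ) + (q (recStep n) : ℝ))
    (hbase : ∀ n, n < N₀ → (q n : ℝ) ≤ A) :
    ∃ C : ℝ, ∀ n : ℕ, 4 ≤ n →
      (q n : ℝ) ≤ C * (Real.logb 2 n) ^ (ε : ℝ) * Real.logb 2 (Real.logb 2 n) := by
  set N₁ : ℕ := max N₀ (2^100) with hN₁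
  set M : ℝ := (((Finset.range N₁).sup q : NNReal) : ℝ) with hM
  have hM0 : 0 ≤ M := NNReal.coe_nonneg _
  have hMle : ∀ k, k < N₁ → (q k : ℝ) ≤ M := by
    intro k hk
    exact_mod_cast NNReal.coe_le_coe.mpr (Finset.le_sup (Finset.mem_range.mpr hk))
  set r : ℝ := (4/5 : ℝ) ^ ε with hrdef
  have hr0 : 0 < r := Real.rpow_pos_of_pos (by norm_num) _
  have hr1 : r < 1 := Real.rpow_lt_one (by norm_num) (by norm_num) hε
  set D : ℝ := A / (1 - r) with hD
  have hD0 : 0 < D := div_pos hA (by linarith)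
  have hDA : A ≤ D * (1 - r) := by
    rw [hD, div_mul_cancel₀ _ (by linarith : (1:ℝ) - r ≠ 0)]
  set C : ℝ := M + A + D with hC
  have hC0 : 0 < C := by linarith
  refine ⟨C, ?_⟩
  intro n
  induction n using Nat.strong_induction_on with
  | _ n ih =>
    intro hn4
    have hx4 : (4:ℝ) ≤ (n:ℝ) := by exact_mod_cast hn4
    set L : ℝ := Real.logb 2 (n:ℝ) with hLdef
    have hL2 : 2 ≤ L := my_logb_ge_two hx4
    have hLε : 1 ≤ L ^ ε := by
      calc (1:ℝ) = 1 ^ ε := (Real.one_rpow ε).symm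
        _ ≤ L ^ ε := Real.rpow_le_rpow (by norm_num) (by linarith) hε.le
    have hLL1 : 1 ≤ Real.logb 2 L := my_logb_ge_one hL2
    by_cases hcase : n < N₁
    · have h1 : (q n : ℝ) ≤ M := hMle n hcase
      have h2 : C * 1 * 1 ≤ C * L ^ ε * Real.logb 2 L := by
        gcongr <;> linarith
      calc (q n : ℝ) ≤ M := h1
        _ ≤ C * 1 * 1 := by linarith
        _ ≤ C * L ^ ε * Real.logb 2 L := h2
    · push_neg at hcase
      have hnN₀ : N₀ ≤ n := le_trans (le_max_left _ _) hcase
      have hn100 : 2^100 ≤ n := le_trans (le_max_right _ _) hcase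
      have hq := hrec n hnN₀
      have hmlt := hm n hnN₀
      set m : ℕ := recStep n with hmdef
      by_cases hmc : m < N₁
      · have h1 : (q m : ℝ) ≤ M := hMle m hmc
        have hLε0 : 0 < L ^ ε := by linarith
        have hA' : A * L ^ ε * 1 ≤ A * L ^ ε * Real.logb 2 L :=
          mul_le_mul_of_nonneg_left hLL1 (by positivity)
        have hM' : M * 1 * 1 ≤ M * L ^ ε * Real.logb 2 L := by
          gcongr <;> linarith
        have hD' : (0:ℝ) * 1 * 1 ≤ D * L ^ ε * Real.logb 2 L := by
          gcongr <;> linarith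
        have hid : C * L ^ ε * Real.logb 2 L
            = A * L ^ ε * Real.logb 2 L + M * L ^ ε * Real.logb 2 L
              + D * L ^ ε * Real.logb 2 L := by rw [hC]; ring
        calc (q n : ℝ) ≤ A * L ^ ε + M := by linarith
          _ ≤ C * L ^ ε * Real.logb 2 L := by rw [hid]; linarith
      · push_neg at hmc
        have hm100 : 2^100 ≤ m := le_trans (le_max_right _ _) hmc
        have hm4 : 4 ≤ m := le_trans (by norm_num) hm100
        have hihm := ih m hmlt hm4
        set Lm : ℝ := Real.logb 2 (m:ℝ) with hLmdef
        have hLm2 : 2 ≤ Lm := my_logb_ge_two (by exact_mod_cast hm4)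
        have hLmL : Lm ≤ (4/5) * L := my_logb_recStep hn100
        have hLmLe : Lm ≤ L := by linarith
        have hLmε : Lm ^ ε ≤ r * L ^ ε := by
          calc Lm ^ ε ≤ ((4/5) * L) ^ ε := Real.rpow_le_rpow (by linarith) hLmL hε.le
            _ = r * L ^ ε := Real.mul_rpow (by norm_num) (by linarith)
        have hLLm : Real.logb 2 Lm ≤ Real.logb 2 L := my_logb_mono (by linarith) hLmLe
        have hLLm1 : 1 ≤ Real.logb 2 Lm := my_logb_ge_one hLm2
        have hLmε0 : 0 ≤ Lm ^ ε := Real.rpow_nonneg (by linarith) _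
        have hqm : (q m : ℝ) ≤ C * (r * L ^ ε) * Real.logb 2 L := by
          refine le_trans hihm ?_
          exact mul_le_mul (mul_le_mul_of_nonneg_left hLmε hC0.le) hLLm
            (by linarith) (mul_nonneg hC0.le (mul_nonneg hr0.le (by linarith)))
        have h1 : A ≤ C * (1 - r) := by
          have e1 : D * (1 - r) ≤ C * (1 - r) :=
            mul_le_mul_of_nonneg_right (by linarith : D ≤ C) (by linarith)
          linarith
        have h2 : A * L ^ ε ≤ (C * (1 - r)) * L ^ ε :=
          mul_le_mul_of_nonneg_right h1 (by linarith)
        have h3 : (C * (1 - r)) * L ^ ε * 1 ≤ (C * (1 - r)) * L ^ ε * Real.logb 2 L :=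
          mul_le_mul_of_nonneg_left hLL1
            (mul_nonneg (mul_nonneg hC0.le (by linarith)) (by linarith))
        have hid : C * L ^ ε * Real.logb 2 L
            = (C * (1 - r)) * L ^ ε * Real.logb 2 L + C * (r * L ^ ε) * Real.logb 2 L := by
          ring
        calc (q n : ℝ) ≤ A * L ^ ε + (q m : ℝ) := hq
          _ ≤ C * L ^ ε * Real.logb 2 L := by rw [hid]; linarith
end

section
/- Let 𝒞 be a t-shallow cutting of a finite set P ⊆ ℝ³ with conflict lists of total size O(m) where m = |P|, and suppose points are assigned to a set P₂ as follows: whenever a corner's region is declared empty (its region contains at least d² corners of lower layers), the ≤ 2t points of its conflict list are added to P₂, and the cost is charged one dollar per point to the conflict lists of those d² corners. If every corner lies in at most d regions of other corners, then |P₂| = O(m/d). -/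
/-- The charging argument bounding `|P₂|`.  Events `e ∈ E` (emptied regions)
each insert at most `2t` points (the conflict list of the region's corner) into
`P₂`; each event is charged to a set `chg e` of at least `d²` corners lying in
the region; each corner lies in at most `d` regions (is charged by at most `d`
events); the cutting has at most `K·m / (2t)` corners (total conflict-list
size `O(m)`, i.e. `2t · |C| ≤ K·m`).  Then `|P₂| = O(m/d)`:
`d · |P₂| ≤ 2·K·m`. -/
theorem charging_bound_P2 {α ι κ : Type*} [DecidableEq α] [DecidableEq κ]
    (E : Finset ι) (ins : ι → Finset α) (chg : ι → Finset κ) (C : Finset κ)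
    (t d K m : ℕ) (ht : 0 < t) (hd : 0 < d)
    (hins : ∀ e ∈ E, (ins e).card ≤ 2 * t)
    (hchgC : ∀ e ∈ E, chg e ⊆ C)
    (hchg : ∀ e ∈ E, d ^ 2 ≤ (chg e).card)
    (hmult : ∀ x : κ, {e ∈ (E : Set ι) | x ∈ chg e}.ncard ≤ d)
    (hC : 2 * t * C.card ≤ K * m) :
    d * (E.biUnion ins).card ≤ 2 * K * m := by
  classical
  -- Step 1: double counting gives d² * |E| ≤ d * |C|
  have h1 : d ^ 2 * E.card ≤ ∑ e ∈ E, (chg e).card := by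
    calc d ^ 2 * E.card = ∑ _e ∈ E, d ^ 2 := by
          rw [Finset.sum_const, smul_eq_mul, mul_comm]
      _ ≤ ∑ e ∈ E, (chg e).card := Finset.sum_le_sum hchg
  have hsum : ∑ e ∈ E, (chg e).card
      = ∑ x ∈ C, (E.filter (fun e => x ∈ chg e)).card := by
    calc ∑ e ∈ E, (chg e).card
        = ∑ e ∈ E, ∑ x ∈ C, (if x ∈ chg e then 1 else 0) := by
          refine Finset.sum_congr rfl fun e he => ?_
          rw [← Finset.card_filter]
          congr 1
          rw [Finset.filter_mem_eq_inter, Finset.inter_eq_right.mpr (hchgC e he)]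
      _ = ∑ x ∈ C, ∑ e ∈ E, (if x ∈ chg e then 1 else 0) := Finset.sum_comm
      _ = ∑ x ∈ C, (E.filter (fun e => x ∈ chg e)).card := by
          exact Finset.sum_congr rfl fun x hx => (Finset.card_filter _ _).symm
  have h2 : ∑ e ∈ E, (chg e).card ≤ d * C.card := by
    rw [hsum]
    calc ∑ x ∈ C, (E.filter (fun e => x ∈ chg e)).card ≤ ∑ _x ∈ C, d := by
          refine Finset.sum_le_sum fun x hx => ?_
          have := hmult x
          have heq : {e ∈ (E : Set ι) | x ∈ chg e}
              = ((E.filter (fun e => x ∈ chg e)) : Finset ι) := by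
            ext e; simp
          rwa [heq, Set.ncard_coe_finset] at this
      _ = d * C.card := by rw [Finset.sum_const, smul_eq_mul, mul_comm]
  have h3 : d * E.card ≤ C.card := by
    have : d * (d * E.card) ≤ d * C.card := by
      calc d * (d * E.card) = d ^ 2 * E.card := by ring
        _ ≤ ∑ e ∈ E, (chg e).card := h1
        _ ≤ d * C.card := h2
    exact Nat.le_of_mul_le_mul_left this hd
  -- Step 2: |biUnion| ≤ 2t * |E|
  have h4 : (E.biUnion ins).card ≤ 2 * t * E.card := by
    calc (E.biUnion ins).card ≤ ∑ e ∈ E, (ins e).card :=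
          Finset.card_biUnion_le
      _ ≤ ∑ _e ∈ E, 2 * t := Finset.sum_le_sum hins
      _ = 2 * t * E.card := by rw [Finset.sum_const, smul_eq_mul, mul_comm]
  calc d * (E.biUnion ins).card ≤ d * (2 * t * E.card) :=
        Nat.mul_le_mul_left d h4
    _ = 2 * t * (d * E.card) := by ring
    _ ≤ 2 * t * C.card := Nat.mul_le_mul_left _ h3
    _ ≤ K * m := hC
    _ ≤ 2 * K * m := by nlinarith
end

section
/- Let 𝒞 be a t-shallow cutting of a finite set P ⊆ ℝ² (2-dimensional) with m = |P|. For every integer d > 0 there exist P' ⊆ P with |P'| ≤ C·m/d and a family ℛ of planar rectangles unbounded along the z-axis (i.e., vertical strips [y₁,y₂]×(−∞,∞) in the (y,z)-plane) such that every conflict list list(C) ∖ P' is covered by O(d) rectangles of ℛ and each rectangle of ℛ contains O(t·d) points of P. -/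
/-!
Sort `P` lexicographically by `(y, z)` and cut it into blocks of `t d` consecutive points.
The `y`-range of those points of a block whose column (the points with the same `y`) has at
most `t d` points spans a strip containing at most `3 t d` points of `P`. Discard the covered
points of heavier columns, at most `2 t` per column since they all lie in the cell of the
topmost one, and the lowest `t / d` covered points of each block; both kinds number `O(|P| / d)`.
A cell `[0, b] × [0, c]` then meets at most one block reaching beyond `y = b`, and each other
block it meets contributes more than `t / d` of the at most `2 t` points of the cell, so
`2 d + 1` strips cover what remains of the cell.
-/

/-- `q` dominates `p` coordinatewise (points of the `(y,z)`-plane). -/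
def dominates2 (q p : Fin 2 → ℝ) : Prop := ∀ i, p i ≤ q i

/-- `p` lies in the cell `[0, c 0] × [0, c 1]`. -/
def inCell2 (c p : Fin 2 → ℝ) : Prop := ∀ i, 0 ≤ p i ∧ p i ≤ c i

/-- A two-dimensional `t`-shallow cutting for `P`. -/
def IsShallowCutting2 (t : ℕ) (P : Finset (Fin 2 → ℝ))
    (A : Finset (Fin 2 → ℝ)) : Prop :=
  (∀ c ∈ A, {p ∈ (P : Set (Fin 2 → ℝ)) | inCell2 c p}.ncard ≤ 2 * t) ∧
  (∀ q : Fin 2 → ℝ, (∀ i, 0 ≤ q i) →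
    {p ∈ (P : Set (Fin 2 → ℝ)) | dominates2 q p}.ncard ≤ t → ∃ c ∈ A, inCell2 c q)

/-- A point `p` of the `(y,z)`-plane lies in the vertical strip
`[S.1, S.2] × (−∞, ∞)`, unbounded along the `z`-axis. -/
def inStrip (S : ℝ × ℝ) (p : Fin 2 → ℝ) : Prop :=
  S.1 ≤ p 0 ∧ p 0 ≤ S.2

open Finset

open scoped Classical

namespace ShallowCutting2

noncomputable section

lemma ncard_sep_coe {α : Type*} (s : Finset α) (r : α → Prop) :
    {a ∈ (s : Set α) | r a}.ncard = #{a ∈ s | r a} := by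
  rw [← Set.ncard_coe_finset, coe_filter]
  rfl

section Rank

variable {α β : Type*} [LinearOrder β]

def rankBy (s : Finset α) (f : α → β) (a : α) : ℕ := #{x ∈ s | f x < f a}

variable {s : Finset α} {f : α → β} {a b : α}

lemma rankBy_lt_rankBy (ha : a ∈ s) (h : f a < f b) : rankBy s f a < rankBy s f b := by
  refine card_lt_card ((ssubset_iff_of_subset fun x hx => ?_).2 ⟨a, ?_, ?_⟩)
  · rw [mem_filter] at hx ⊢
    exact ⟨hx.1, hx.2.trans h⟩
  · exact mem_filter.2 ⟨ha, h⟩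
  · exact fun ha' => lt_irrefl _ (mem_filter.1 ha').2

lemma rankBy_injOn (hf : Set.InjOn f s) : Set.InjOn (rankBy s f) s := by
  intro a ha b hb hab
  rcases lt_trichotomy (f a) (f b) with h | h | h
  · exact absurd hab (rankBy_lt_rankBy ha h).ne
  · exact hf ha hb h
  · exact absurd hab (rankBy_lt_rankBy hb h).ne'

lemma rankBy_lt_card (ha : a ∈ s) : rankBy s f a < #s :=
  card_lt_card (filter_ssubset.2 ⟨a, ha, lt_irrefl _⟩)

end Rank

section Blocks

def lexKey (p : Fin 2 → ℝ) : ℝ ×ₗ ℝ := toLex (p 0, p 1)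

lemma lexKey_injective : Function.Injective lexKey := by
  intro p q h
  obtain ⟨h0, h1⟩ := Prod.ext_iff.1 (toLex.injective h)
  funext i
  fin_cases i
  exacts [h0, h1]

lemma lexKey_lt_lexKey {p q : Fin 2 → ℝ} (h : p 0 < q 0) : lexKey p < lexKey q :=
  Prod.Lex.toLex_lt_toLex.2 (Or.inl h)

lemma le_of_lexKey_lt {p q : Fin 2 → ℝ} (h : lexKey p < lexKey q) : p 0 ≤ q 0 := by
  rcases Prod.Lex.toLex_lt_toLex.1 h with h | ⟨h, -⟩
  exacts [h.le, h.le]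

variable (P : Finset (Fin 2 → ℝ)) (N : ℕ)

def column (v : ℝ) : Finset (Fin 2 → ℝ) := {q ∈ P | q 0 = v}

def IsLight (p : Fin 2 → ℝ) : Prop := #(column P (p 0)) ≤ N

/-- Sorting `P` lexicographically by `(y, z)` and cutting the sorted list into consecutive
runs of length `N`, `block P N p` is the index of the run containing `p`. -/
def block (p : Fin 2 → ℝ) : ℕ := rankBy P lexKey p / N

def lightInBlock (j : ℕ) : Finset (Fin 2 → ℝ) := {p ∈ P | block P N p = j ∧ IsLight P N p}

def blockStrip (j : ℕ) : ℝ × ℝ :=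
  (sInf ((lightInBlock P N j).image (· 0) : Set ℝ), sSup ((lightInBlock P N j).image (· 0) : Set ℝ))

def strips : Finset (ℝ × ℝ) :=
  {p ∈ P | IsLight P N p}.image fun p => blockStrip P N (block P N p)

variable {P N} {p q : Fin 2 → ℝ}

lemma rankBy_le_rankBy_add_card_column_left (h : p 0 ≤ q 0) :
    rankBy P lexKey p ≤ rankBy P lexKey q + #(column P (p 0)) := by
  refine (card_le_card fun r hr => ?_).trans (card_union_le _ _)
  rw [mem_filter] at hr
  rw [mem_union, column, mem_filter, mem_filter]
  rcases (le_of_lexKey_lt hr.2).lt_or_eq with hlt | heq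
  · exact Or.inl ⟨hr.1, lexKey_lt_lexKey (hlt.trans_le h)⟩
  · exact Or.inr ⟨hr.1, heq⟩

lemma rankBy_le_rankBy_add_card_column_right (h : p 0 ≤ q 0) :
    rankBy P lexKey p ≤ rankBy P lexKey q + #(column P (q 0)) := by
  refine (card_le_card fun r hr => ?_).trans (card_union_le _ _)
  rw [mem_filter] at hr
  rw [mem_union, column, mem_filter, mem_filter]
  rcases ((le_of_lexKey_lt hr.2).trans h).lt_or_eq with hlt | heq
  · exact Or.inl ⟨hr.1, lexKey_lt_lexKey hlt⟩
  · exact Or.inr ⟨hr.1, heq⟩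

lemma block_le_block (hp : p ∈ P) (h : p 0 < q 0) : block P N p ≤ block P N q :=
  Nat.div_le_div_right (rankBy_lt_rankBy hp (lexKey_lt_lexKey h)).le

lemma block_le_card_div (hp : p ∈ P) : block P N p ≤ #P / N :=
  Nat.div_le_div_right (rankBy_lt_card hp).le

lemma pos_of_isLight (hp : p ∈ P) (hl : IsLight P N p) : 0 < N :=
  (card_pos.2 ⟨p, (mem_filter.2 ⟨hp, rfl⟩ : p ∈ column P (p 0))⟩).trans_le hl

/-- The ranks of the points of the strip lie in `[N (j - 1), N (j + 2))`, where `j` is the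
common block of `a` and `b`: the light endpoint columns each add at most `N` to the range. -/
lemma card_filter_inStrip_le {a b : Fin 2 → ℝ} (ha : a ∈ P)
    (hla : IsLight P N a) (hlb : IsLight P N b) (hab : block P N a = block P N b) :
    #{q ∈ P | inStrip (a 0, b 0) q} ≤ 3 * N := by
  set j := block P N b
  have hN := pos_of_isLight ha hla
  have hj_le_a : j * N ≤ rankBy P lexKey a := hab ▸ Nat.div_mul_le_self _ _
  have hb_lt_j : rankBy P lexKey b < j * N + N := Nat.lt_div_mul_add hN
  set S : Finset (Fin 2 → ℝ) := {q ∈ P | inStrip (a 0, b 0) q}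
  have hmaps : Set.MapsTo (rankBy P lexKey) S (Ico (j * N - N) (j * N + 2 * N)) := by
    intro q hq
    obtain ⟨hq, hqa, hqb⟩ := mem_filter.1 hq
    have h₁ := rankBy_le_rankBy_add_card_column_left (P := P) hqa
    have h₂ := rankBy_le_rankBy_add_card_column_right (P := P) hqb
    unfold IsLight at hla hlb
    rw [coe_Ico, Set.mem_Ico]
    omega
  have hinj : Set.InjOn (rankBy P lexKey) S :=
    (rankBy_injOn lexKey_injective.injOn).mono (coe_subset.2 (filter_subset _ _))
  calc #S ≤ #(Ico (j * N - N) (j * N + 2 * N)) := card_le_card_of_injOn _ hmaps hinj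
    _ ≤ 3 * N := by rw [Nat.card_Ico]; omega

lemma inStrip_blockStrip (hp : p ∈ P) (hl : IsLight P N p) :
    inStrip (blockStrip P N (block P N p)) p := by
  have hmem : p 0 ∈ ((lightInBlock P N (block P N p)).image (· 0) : Set ℝ) := by
    rw [coe_image]
    exact ⟨p, mem_filter.2 ⟨hp, rfl, hl⟩, rfl⟩
  exact ⟨csInf_le (finite_toSet _).bddBelow hmem, le_csSup (finite_toSet _).bddAbove hmem⟩

lemma card_filter_inStrip_blockStrip_le (hp : p ∈ P) (hl : IsLight P N p) :
    #{q ∈ P | inStrip (blockStrip P N (block P N p)) q} ≤ 3 * N := by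
  set Y := (lightInBlock P N (block P N p)).image (· 0)
  have hY : (Y : Set ℝ).Nonempty := ⟨p 0, mem_image_of_mem _ (mem_filter.2 ⟨hp, rfl, hl⟩)⟩
  obtain ⟨a, ha, ha0⟩ := mem_image.1 (hY.csInf_mem (finite_toSet Y))
  obtain ⟨b, hb, hb0⟩ := mem_image.1 (hY.csSup_mem (finite_toSet Y))
  obtain ⟨haP, hablock, hal⟩ := mem_filter.1 ha
  obtain ⟨-, hbblock, hbl⟩ := mem_filter.1 hb
  have hstrip : blockStrip P N (block P N p) = (a 0, b 0) := by
    rw [ha0, hb0]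
    rfl
  rw [hstrip]
  exact card_filter_inStrip_le haP hal hbl (hablock.trans hbblock.symm)

end Blocks

section Cutting

def Covered (𝒞 : Finset (Fin 2 → ℝ)) (p : Fin 2 → ℝ) : Prop := ∃ c ∈ 𝒞, inCell2 c p

def lowerInBlock (P 𝒞 : Finset (Fin 2 → ℝ)) (N : ℕ) (p : Fin 2 → ℝ) : Finset (Fin 2 → ℝ) :=
  {q ∈ P | Covered 𝒞 q ∧ block P N q = block P N p ∧ q 1 ≤ p 1}

def exceptional (t d : ℕ) (P 𝒞 : Finset (Fin 2 → ℝ)) : Finset (Fin 2 → ℝ) :=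
  {p ∈ P | Covered 𝒞 p ∧ (¬ IsLight P (t * d) p ∨ d * #(lowerInBlock P 𝒞 (t * d) p) ≤ t)}

def keptInCell (t d : ℕ) (P 𝒞 : Finset (Fin 2 → ℝ)) (c : Fin 2 → ℝ) : Finset (Fin 2 → ℝ) :=
  {p ∈ P | inCell2 c p ∧ p ∉ exceptional t d P 𝒞}

variable {t d N : ℕ} {P 𝒞 : Finset (Fin 2 → ℝ)} {c p : Fin 2 → ℝ}

lemma Covered.inCell2 (hp : Covered 𝒞 p) (h₀ : p 0 ≤ c 0) (h₁ : p 1 ≤ c 1) : inCell2 c p := by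
  obtain ⟨c', -, hc'⟩ := hp
  intro i
  fin_cases i
  exacts [⟨(hc' 0).1, h₀⟩, ⟨(hc' 1).1, h₁⟩]

lemma card_filter_covered_low_le :
    d * #{p ∈ P | Covered 𝒞 p ∧ d * #(lowerInBlock P 𝒞 N p) ≤ t} ≤ t * (#P / N + 1) := by
  set L := {p ∈ P | Covered 𝒞 p ∧ d * #(lowerInBlock P 𝒞 N p) ≤ t}
  have hfiber : ∀ j ∈ L.image (block P N), d * #{p ∈ L | block P N p = j} ≤ t := by
    intro j hj
    have hne : ({p ∈ L | block P N p = j} : Finset _).Nonempty := by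
      obtain ⟨p, hp, rfl⟩ := mem_image.1 hj
      exact ⟨p, mem_filter.2 ⟨hp, rfl⟩⟩
    -- all low points of the block lie in `lowerInBlock` of the topmost one
    obtain ⟨top, htop, hmax⟩ := exists_max_image _ (· 1) hne
    obtain ⟨htopL, rfl⟩ := mem_filter.1 htop
    refine le_trans (Nat.mul_le_mul_left d (card_le_card fun q hq => ?_)) (mem_filter.1 htopL).2.2
    obtain ⟨hqL, hqj⟩ := mem_filter.1 hq
    exact mem_filter.2 ⟨(mem_filter.1 hqL).1, (mem_filter.1 hqL).2.1, hqj, hmax q hq⟩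
  have hblocks : #(L.image (block P N)) ≤ #P / N + 1 := by
    refine (card_le_card fun j hj => ?_).trans (card_range _).le
    obtain ⟨p, hp, rfl⟩ := mem_image.1 hj
    exact mem_range.2 (Nat.lt_succ_of_le (block_le_card_div (mem_filter.1 hp).1))
  calc d * #L = ∑ j ∈ L.image (block P N), d * #{p ∈ L | block P N p = j} := by
        rw [card_eq_sum_card_image (block P N) L, mul_sum]
    _ ≤ ∑ _j ∈ L.image (block P N), t := sum_le_sum hfiber
    _ = t * #(L.image (block P N)) := by rw [sum_const, smul_eq_mul, mul_comm]
    _ ≤ t * (#P / N + 1) := Nat.mul_le_mul_left t hblocks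

lemma isLight_and_lt_of_mem_keptInCell (hc : c ∈ 𝒞) (hp : p ∈ keptInCell t d P 𝒞 c) :
    IsLight P (t * d) p ∧ t < d * #(lowerInBlock P 𝒞 (t * d) p) := by
  obtain ⟨hpP, hpc, hpe⟩ := mem_filter.1 hp
  obtain ⟨hlight, hlow⟩ := not_or.1 fun h => hpe (mem_filter.2 ⟨hpP, ⟨c, hc, hpc⟩, h⟩)
  exact ⟨not_not.1 hlight, not_le.1 hlow⟩

/-- Blocks are consecutive in the `y`-order, so only the last block meeting `K` can reach
beyond `x`. -/
lemma card_filter_exists_lt_le_one {K : Finset (Fin 2 → ℝ)} (hK : K ⊆ P) {x : ℝ}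
    (hKx : ∀ p ∈ K, p 0 ≤ x) :
    #{j ∈ K.image (block P N) | ∃ q ∈ P, block P N q = j ∧ x < q 0} ≤ 1 := by
  set B := {j ∈ K.image (block P N) | ∃ q ∈ P, block P N q = j ∧ x < q 0}
  have hle : ∀ a ∈ B, ∀ b ∈ B, a ≤ b := by
    intro a ha b hb
    obtain ⟨p, hpK, rfl⟩ := mem_image.1 (mem_filter.1 ha).1
    obtain ⟨q, -, rfl, hxq⟩ := (mem_filter.1 hb).2
    exact block_le_block (hK hpK) ((hKx p hpK).trans_lt hxq)
  exact card_le_one.2 fun a ha b hb => (hle a ha b hb).antisymm (hle b hb a ha)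

end Cutting

end

end ShallowCutting2

namespace IsShallowCutting2

open ShallowCutting2

variable {t d : ℕ} {P 𝒞 : Finset (Fin 2 → ℝ)} {c : Fin 2 → ℝ}

lemma card_filter_inCell2_le (h : IsShallowCutting2 t P 𝒞) (hc : c ∈ 𝒞) :
    #{p ∈ P | inCell2 c p} ≤ 2 * t :=
  ncard_sep_coe P _ ▸ h.1 c hc

/-- If `#P ≤ t`, every point of the closed positive quadrant would lie in one of the finitely
many bounded cells. -/
lemma lt_card (h : IsShallowCutting2 t P 𝒞) : t < #P := by
  by_contra! hP
  obtain ⟨M, hM⟩ := (𝒞.image (· 1)).exists_le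
  have hq : ∀ i, 0 ≤ (![0, max M 0 + 1] : Fin 2 → ℝ) i := by
    intro i
    fin_cases i <;> simp [add_nonneg]
  obtain ⟨c, hc, hqc⟩ := h.2 _ hq
    (by rw [ncard_sep_coe]; exact (card_filter_le _ _).trans hP)
  have := (hqc 1).2.trans (hM _ (mem_image_of_mem _ hc))
  simp only [Fin.isValue, Matrix.cons_val_one, Matrix.cons_val_zero] at this
  linarith [le_max_left M 0]

lemma card_filter_column_covered_le (h : IsShallowCutting2 t P 𝒞) (v : ℝ) :
    #{p ∈ column P v | Covered 𝒞 p} ≤ 2 * t := by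
  set S := {p ∈ column P v | Covered 𝒞 p}
  rcases S.eq_empty_or_nonempty with hS | hS
  · simp [hS]
  obtain ⟨top, htop, hmax⟩ := exists_max_image S (· 1) hS
  obtain ⟨htopv, c, hc, htopc⟩ := mem_filter.1 htop
  refine (card_le_card fun q hq => ?_).trans (h.card_filter_inCell2_le hc)
  obtain ⟨hqv, hqcov⟩ := mem_filter.1 hq
  have hq0 : q 0 = top 0 := (mem_filter.1 hqv).2.trans (mem_filter.1 htopv).2.symm
  exact mem_filter.2 ⟨(mem_filter.1 hqv).1,
    hqcov.inCell2 (hq0 ▸ (htopc 0).2) ((hmax q hq).trans (htopc 1).2)⟩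

lemma card_filter_covered_not_isLight_le (h : IsShallowCutting2 t P 𝒞) (N : ℕ) :
    (N + 1) * #{p ∈ P | Covered 𝒞 p ∧ ¬ IsLight P N p} ≤ 2 * t * #P := by
  set H := {p ∈ P | Covered 𝒞 p ∧ ¬ IsLight P N p}
  set Heavy := {p ∈ P | ¬ IsLight P N p}
  have hH : #H ≤ 2 * t * #(H.image (· 0)) := by
    refine card_le_mul_card_image H _ fun v _ => (card_le_card fun p hp => ?_).trans
      (h.card_filter_column_covered_le v)
    obtain ⟨hpH, rfl⟩ := mem_filter.1 hp
    obtain ⟨hpP, hpcov, -⟩ := mem_filter.1 hpH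
    exact mem_filter.2 ⟨mem_filter.2 ⟨hpP, rfl⟩, hpcov⟩
  have hcolumns : (N + 1) * #(Heavy.image (· 0)) ≤ #Heavy := by
    refine mul_card_image_le_card Heavy _ fun v hv => ?_
    obtain ⟨p, hp, rfl⟩ := mem_image.1 hv
    obtain ⟨hpP, hpheavy⟩ := mem_filter.1 hp
    refine (not_le.1 hpheavy).trans_le (card_le_card fun q hq => ?_)
    obtain ⟨hqP, hq0⟩ := mem_filter.1 hq
    exact mem_filter.2 ⟨mem_filter.2 ⟨hqP, by rwa [IsLight, hq0]⟩, hq0⟩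
  have hsub : H.image (· 0) ⊆ Heavy.image (· 0) :=
    image_subset_image fun p hp => mem_filter.2 ⟨(mem_filter.1 hp).1, (mem_filter.1 hp).2.2⟩
  have hV : (N + 1) * #(H.image (· 0)) ≤ #P :=
    calc (N + 1) * #(H.image (· 0)) ≤ (N + 1) * #(Heavy.image (· 0)) :=
          Nat.mul_le_mul_left _ (card_le_card hsub)
      _ ≤ #Heavy := hcolumns
      _ ≤ #P := card_filter_le _ _
  calc (N + 1) * #H ≤ 2 * t * ((N + 1) * #(H.image (· 0))) := by
        rw [mul_left_comm]
        exact Nat.mul_le_mul_left _ hH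
    _ ≤ 2 * t * #P := Nat.mul_le_mul_left _ hV

lemma card_exceptional_le (h : IsShallowCutting2 t P 𝒞) (ht : 0 < t) (hd : 0 < d) :
    d * #(exceptional t d P 𝒞) ≤ 4 * #P := by
  set H := {p ∈ P | Covered 𝒞 p ∧ ¬ IsLight P (t * d) p}
  set L := {p ∈ P | Covered 𝒞 p ∧ d * #(lowerInBlock P 𝒞 (t * d) p) ≤ t}
  have hsub : exceptional t d P 𝒞 ⊆ H ∪ L := by
    intro p hp
    obtain ⟨hpP, hpcov, hheavy | hlow⟩ := mem_filter.1 hp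
    exacts [mem_union_left _ (mem_filter.2 ⟨hpP, hpcov, hheavy⟩),
      mem_union_right _ (mem_filter.2 ⟨hpP, hpcov, hlow⟩)]
  have hH : d * #H ≤ 2 * #P := by
    refine Nat.le_of_mul_le_mul_left ?_ ht
    calc t * (d * #H) ≤ (t * d + 1) * #H := by nlinarith
      _ ≤ 2 * t * #P := h.card_filter_covered_not_isLight_le (t * d)
      _ = t * (2 * #P) := by ring
  have hL : d * #L ≤ 2 * #P := by
    have hdiv : t * (#P / (t * d)) ≤ #P :=
      (Nat.mul_le_mul_left t (Nat.div_le_div_left (Nat.le_mul_of_pos_right t hd) ht)).trans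
        (Nat.mul_div_le _ _)
    calc d * #L ≤ t * (#P / (t * d) + 1) := card_filter_covered_low_le
      _ = t * (#P / (t * d)) + t := by ring
      _ ≤ 2 * #P := by linarith [h.lt_card]
  calc d * #(exceptional t d P 𝒞) ≤ d * #H + d * #L := by
        rw [← mul_add]
        exact Nat.mul_le_mul_left d ((card_le_card hsub).trans (card_union_le _ _))
    _ ≤ 4 * #P := by omega

lemma card_blocks_left_le (h : IsShallowCutting2 t P 𝒞) (hc : c ∈ 𝒞) :
    #{j ∈ (keptInCell t d P 𝒞 c).image (block P (t * d)) |
      ∀ q ∈ P, block P (t * d) q = j → q 0 ≤ c 0} ≤ 2 * d := by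
  set N := t * d
  set L := {j ∈ (keptInCell t d P 𝒞 c).image (block P N) | ∀ q ∈ P, block P N q = j → q 0 ≤ c 0}
  set fiber := fun j => {q ∈ {q ∈ P | inCell2 c q} | block P N q = j}
  have hfiber : ∀ j ∈ L, t + 1 ≤ d * #(fiber j) := by
    intro j hj
    obtain ⟨hjK, hleft⟩ := mem_filter.1 hj
    obtain ⟨p, hpK, rfl⟩ := mem_image.1 hjK
    obtain ⟨-, hpc, -⟩ := mem_filter.1 hpK
    refine (isLight_and_lt_of_mem_keptInCell hc hpK).2.trans_le
      (Nat.mul_le_mul_left d (card_le_card fun q hq => ?_))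
    obtain ⟨hqP, hqcov, hqb, hq1⟩ := mem_filter.1 hq
    exact mem_filter.2 ⟨mem_filter.2 ⟨hqP, hqcov.inCell2 (hleft q hqP hqb) (hq1.trans (hpc 1).2)⟩,
      hqb⟩
  have hsum : ∑ j ∈ L, #(fiber j) ≤ 2 * t :=
    (sum_card_fiberwise_eq_card_filter _ _ _).trans_le
      ((card_filter_le _ _).trans (h.card_filter_inCell2_le hc))
  have hmul : (t + 1) * #L ≤ (t + 1) * (2 * d) :=
    calc (t + 1) * #L = ∑ _j ∈ L, (t + 1) := by rw [sum_const, smul_eq_mul, mul_comm]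
      _ ≤ ∑ j ∈ L, d * #(fiber j) := sum_le_sum hfiber
      _ = d * ∑ j ∈ L, #(fiber j) := (mul_sum _ _ _).symm
      _ ≤ d * (2 * t) := Nat.mul_le_mul_left d hsum
      _ ≤ (t + 1) * (2 * d) := by nlinarith
  exact Nat.le_of_mul_le_mul_left hmul (Nat.succ_pos t)

lemma card_image_block_keptInCell_le (h : IsShallowCutting2 t P 𝒞) (hc : c ∈ 𝒞) :
    #((keptInCell t d P 𝒞 c).image (block P (t * d))) ≤ 2 * d + 1 := by
  rw [← card_filter_add_card_filter_not fun j => ∀ q ∈ P, block P (t * d) q = j → q 0 ≤ c 0]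
  have hright := card_filter_exists_lt_le_one (N := t * d) (K := keptInCell t d P 𝒞 c)
    (filter_subset _ P) fun p hp => ((mem_filter.1 hp).2.1 0).2
  refine add_le_add (h.card_blocks_left_le hc) ((card_le_card fun j hj => ?_).trans hright)
  obtain ⟨hjK, hj⟩ := mem_filter.1 hj
  push Not at hj
  exact mem_filter.2 ⟨hjK, hj⟩

lemma exists_strips_cover (h : IsShallowCutting2 t P 𝒞) (hc : c ∈ 𝒞) :
    ∃ F ⊆ strips P (t * d), #F ≤ 2 * d + 1 ∧
      ∀ p ∈ P, inCell2 c p → p ∉ exceptional t d P 𝒞 → ∃ S ∈ F, inStrip S p := by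
  refine ⟨(keptInCell t d P 𝒞 c).image fun p => blockStrip P (t * d) (block P (t * d) p),
    image_subset_image fun p hp => ?_, ?_, fun p hp hpc hpe => ?_⟩
  · exact mem_filter.2 ⟨(mem_filter.1 hp).1, (isLight_and_lt_of_mem_keptInCell hc hp).1⟩
  · change #((keptInCell t d P 𝒞 c).image (blockStrip P (t * d) ∘ block P (t * d))) ≤ _
    rw [← image_image]
    exact card_image_le.trans (h.card_image_block_keptInCell_le hc)
  · have hp' : p ∈ keptInCell t d P 𝒞 c := mem_filter.2 ⟨hp, hpc, hpe⟩
    exact ⟨_, mem_image_of_mem _ hp',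
      inStrip_blockStrip hp (isLight_and_lt_of_mem_keptInCell hc hp').1⟩

end IsShallowCutting2

open ShallowCutting2 in
/-- Covering of a two-dimensional shallow cutting.  For a `t`-shallow cutting
`𝒞` of a finite `P ⊆ ℝ²` with `m = |P|` and every `d > 0`, there are `P' ⊆ P`
with `|P'| ≤ C·m/d` and a family `ℛ` of strips unbounded along the `z`-axis
such that every conflict list minus `P'` is covered by `O(d)` strips of `ℛ`
and every strip of `ℛ` contains `O(t·d)` points of `P`. -/
theorem shallow_cutting_cover_2d :
    ∃ C : ℕ, ∀ (t d : ℕ) (P 𝒞 : Finset (Fin 2 → ℝ)),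
      0 < t → 0 < d →
      IsShallowCutting2 t P 𝒞 →
      ∃ (P' : Finset (Fin 2 → ℝ)) (ℛ : Finset (ℝ × ℝ)),
        P' ⊆ P ∧
        d * P'.card ≤ C * P.card ∧
        (∀ c ∈ 𝒞, ∃ F ⊆ ℛ, F.card ≤ C * d ∧
          ∀ p ∈ P, inCell2 c p → p ∉ P' → ∃ S ∈ F, inStrip S p) ∧
        (∀ S ∈ ℛ,
          {p ∈ (P : Set (Fin 2 → ℝ)) | inStrip S p}.ncard ≤ C * (t * d)) := by
  refine ⟨4, fun t d P 𝒞 ht hd h => ⟨exceptional t d P 𝒞, strips P (t * d), filter_subset _ _,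
    h.card_exceptional_le ht hd, fun c hc => ?_, fun S hS => ?_⟩⟩
  · obtain ⟨F, hF, hFcard, hcover⟩ := h.exists_strips_cover hc
    exact ⟨F, hF, hFcard.trans (by omega), hcover⟩
  · obtain ⟨p, hp, rfl⟩ := mem_image.1 hS
    rw [ncard_sep_coe]
    exact (card_filter_inStrip_blockStrip_le (mem_filter.1 hp).1 (mem_filter.1 hp).2).trans
      (by omega)
end
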